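/- Let n be an even integer with n ≥ 2 and let m be an integer with m ≥ 5n/2 − 1. Then the permutation (1, n)(2n−1, 2n) — the product of the transposition exchanging 1 and n with the transposition exchanging 2n−1 and 2n — belongs to the subgroup C(n, m) of S_m generated by the n-crossing permutations. -/

import Mathlib

/-- The underlying function of the `n`-crossing permutation `π_j` over `{1, …, m}` (as a
function on `ℕ`): it sends `j + k` to `j + n - 1 - k` for `0 ≤ k ≤ n - 1` and fixes all
other points. -/
def crossFun (n j i : ℕ) : ℕ :=
  if j ≤ i ∧ i < j + n then 2 * j + n - 1 - i else i

lemma crossFun_involutive (n j : ℕ) : Function.Involutive (crossFun n j) := by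
  intro i
  unfold crossFun
  split_ifs <;> omega

/-- The `n`-crossing permutation `π_j`, viewed as a permutation of `ℕ` fixing every point
outside `{j, …, j + n - 1}`. -/
def crossPerm (n j : ℕ) : Equiv.Perm ℕ :=
  Function.Involutive.toPerm _ (crossFun_involutive n j)

/-- `C n m` is the subgroup of the symmetric group `S_m` (realized as permutations of `ℕ`
supported on `{1, …, m}`) generated by the `n`-crossing permutations `π_1, …, π_{m-n+1}`. -/
def C (n m : ℕ) : Subgroup (Equiv.Perm ℕ) :=
  Subgroup.closure {σ | ∃ j, 1 ≤ j ∧ j ≤ m - n + 1 ∧ σ = crossPerm n j}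

/-!
Write `n = 2k`. Removing the outer pair from the reversal `π₁` of `[1, n]` leaves the reversal
`R` of `[2, n - 1]`: `π₁ = (1, n) R`. The intervals of `πₙ` and `π_{3k}` are disjoint from
`[2, n - 1]`, so `Y = πₙ π₁ π_{3k} πₙ` commutes with `R`, and it maps `1 ↦ 2n - 1`, `n ↦ 2n`.
Hence `Y π₁ Y⁻¹ = (2n - 1, 2n) R`, and since `R` is an involution commuting with both
transpositions, `π₁ · Y π₁ Y⁻¹ = (1, n)(2n - 1, 2n)`.
-/

open Equiv

theorem mul_mul_conj_mul_of_commute {G : Type*} [Group G] {s r g : G} (hsr : Commute s r)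
    (hgr : Commute g r) (hr : r * r = 1) : s * r * (g * (s * r) * g⁻¹) = s * (g * s * g⁻¹) := by
  have ht : Commute (g * s * g⁻¹) r := (hgr.mul_left hsr).mul_left hgr.inv_left
  calc s * r * (g * (s * r) * g⁻¹) = s * (r * (g * s * g⁻¹)) * r := by
        simp only [mul_assoc, hgr.inv_left.eq]
    _ = s * (g * s * g⁻¹) * (r * r) := by rw [← ht.eq]; simp only [mul_assoc]
    _ = s * (g * s * g⁻¹) := by rw [hr, mul_one]

namespace Equiv.Perm

variable {α : Type*} [DecidableEq α]

theorem commute_swap_of_apply_eq {f : Perm α} {a b : α} (ha : f a = a) (hb : f b = b) :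
    Commute f (swap a b) := by
  rw [Commute, SemiconjBy, ← mul_inv_eq_iff_eq_mul, ← swap_apply_apply, ha, hb]

theorem swap_mul_mul_conj_swap_mul {a b : α} {r g : Perm α} (hra : r a = a) (hrb : r b = b)
    (hgr : Commute g r) (hr : r * r = 1) :
    swap a b * r * (g * (swap a b * r) * g⁻¹) = swap a b * swap (g a) (g b) := by
  rw [mul_mul_conj_mul_of_commute (commute_swap_of_apply_eq hra hrb).symm hgr hr,
    swap_apply_apply]

end Equiv.Perm

theorem crossPerm_apply (n j i : ℕ) :
    crossPerm n j i = if j ≤ i ∧ i < j + n then 2 * j + n - 1 - i else i := rfl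

theorem crossPerm_apply_of_notMem {n j i : ℕ} (h : i < j ∨ j + n ≤ i) : crossPerm n j i = i := by
  rw [crossPerm_apply, if_neg (by omega)]

theorem crossPerm_mul_self (n j : ℕ) : crossPerm n j * crossPerm n j = 1 :=
  Equiv.ext (crossFun_involutive n j)

theorem disjoint_crossPerm {n j n' j' : ℕ} (h : j + n ≤ j') :
    (crossPerm n j).Disjoint (crossPerm n' j') := fun i => by
  by_cases hi : i < j + n
  · exact Or.inr (crossPerm_apply_of_notMem (by omega))
  · exact Or.inl (crossPerm_apply_of_notMem (by omega))

theorem crossPerm_eq_swap_mul {n : ℕ} (j : ℕ) (hn : 2 ≤ n) :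
    crossPerm n j = swap j (j + n - 1) * crossPerm (n - 2) (j + 1) := by
  ext i
  simp only [Perm.mul_apply, crossPerm_apply, swap_apply_def]
  split_ifs <;> omega

theorem crossPerm_mem_C {n m j : ℕ} (h1 : 1 ≤ j) (h2 : j ≤ m - n + 1) : crossPerm n j ∈ C n m :=
  Subgroup.subset_closure ⟨j, h1, h2, rfl⟩

theorem crossPerm_one_mul_conj_crossPerm_one {n k : ℕ} (hk : n = k + k) (hn : 2 ≤ n) :
    let Y := crossPerm n n * crossPerm n 1 * crossPerm n (3 * k) * crossPerm n n
    crossPerm n 1 * (Y * crossPerm n 1 * Y⁻¹) = swap 1 n * swap (2 * n - 1) (2 * n) := by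
  intro Y
  set R := crossPerm (n - 2) (1 + 1)
  have hY1 : Y 1 = 2 * n - 1 := by
    simp only [Y, Perm.mul_apply, crossPerm_apply]
    split_ifs <;> omega
  have hYn : Y n = 2 * n := by
    simp only [Y, Perm.mul_apply, crossPerm_apply]
    split_ifs <;> omega
  have hR1 : R 1 = 1 := crossPerm_apply_of_notMem (by omega)
  have hRn : R n = n := crossPerm_apply_of_notMem (by omega)
  have hP : crossPerm n 1 = swap 1 n * R := by
    rw [crossPerm_eq_swap_mul 1 hn, Nat.add_sub_cancel_left]
  have hPR : Commute (crossPerm n 1) R :=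
    hP ▸ (Perm.commute_swap_of_apply_eq hR1 hRn).symm.mul_left (Commute.refl R)
  have hnR : Commute (crossPerm n n) R := (disjoint_crossPerm (by omega)).commute.symm
  have hqR : Commute (crossPerm n (3 * k)) R := (disjoint_crossPerm (by omega)).commute.symm
  have hYR : Commute Y R := ((hnR.mul_left hPR).mul_left hqR).mul_left hnR
  rw [hP, Perm.swap_mul_mul_conj_swap_mul hR1 hRn hYR (crossPerm_mul_self _ _), hY1, hYn]

theorem stmt4 (n : ℕ) (hn : Even n) (hn2 : 2 ≤ n)
    (m : ℕ) (hm : 5 * n / 2 - 1 ≤ m) :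
    Equiv.swap 1 n * Equiv.swap (2 * n - 1) (2 * n) ∈ C n m := by
  obtain ⟨k, hk⟩ := hn
  rw [← crossPerm_one_mul_conj_crossPerm_one hk hn2]
  have h1 : crossPerm n 1 ∈ C n m := crossPerm_mem_C le_rfl (by omega)
  have hN : crossPerm n n ∈ C n m := crossPerm_mem_C (by omega) (by omega)
  have hq : crossPerm n (3 * k) ∈ C n m := crossPerm_mem_C (by omega) (by omega)
  have hY := mul_mem (mul_mem (mul_mem hN h1) hq) hN
  exact mul_mem h1 (mul_mem (mul_mem hY h1) (inv_mem hY))
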